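/- Let A be an n×n real matrix, B an n×m real matrix, α > 0, β > 0, q a positive natural number, and 0 < a ≤ ā. Let 0 = ℏ₀ < ℏ₁ < … < ℏ_L be real numbers (L ≥ 1) and set Δ = max_{l∈{1,…,L}} (ℏ_l − ℏ_{l−1}). Let V : ℝⁿ → ℝ satisfy a‖x‖∞^q ≤ V(x) ≤ ā‖x‖∞^q for all x ∈ ℝⁿ. Suppose (x_k)_{k∈ℕ} in ℝⁿ, (û_k)_{k∈ℕ} in ℝᵐ, and (L_k)_{k∈ℕ} with L_k ∈ {1,…,L} satisfy, for every k: ‖û_k‖∞ ≤ β‖x_k‖∞; V(exp(ℏ_l A)·x_k + (∫₀^{ℏ_l} exp(sA) ds)·B·û_k) ≤ e^{−αqℏ_l}·V(x_k) for every l ∈ {1,…,L_k}; and x_{k+1} = exp(ℏ_{L_k} A)·x_k + (∫₀^{ℏ_{L_k}} exp(sA) ds)·B·û_k. Define the execution instants t₀ = 0, t_{k+1} = t_k + ℏ_{L_k}, and x : [0,∞) → ℝⁿ by x(t) = exp((t−t_k)A)·x_k + (∫₀^{t−t_k} exp(sA) ds)·B·û_k for t ∈ [t_k, t_{k+1}),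 k ∈ ℕ. Then for all t ≥ 0, ‖x(t)‖∞ ≤ c·e^{−αt}·‖x_0‖∞, where c = (ā/a)^{1/q}·(e^{‖A‖∞ Δ} + β·e^{α(ℏ_L − Δ)}·(∫₀^{Δ} e^{‖A‖∞ s} ds)·‖B‖∞)·e^{αΔ}. -/

import Mathlib

open Matrix

attribute [local instance] Matrix.linftyOpNormedAddCommGroup Matrix.linftyOpNormedRing
  Matrix.linftyOpNormedAlgebra

/-- Matrix exponential `exp (t • A)` of a square real matrix. -/
noncomputable def mexp {n : ℕ} (t : ℝ) (A : Matrix (Fin n) (Fin n) ℝ) :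
    Matrix (Fin n) (Fin n) ℝ :=
  NormedSpace.exp (t • A)

/-- Entrywise integral `∫₀ʰ exp (s • A) ds` of the matrix exponential. -/
noncomputable def mint {n : ℕ} (h : ℝ) (A : Matrix (Fin n) (Fin n) ℝ) :
    Matrix (Fin n) (Fin n) ℝ :=
  Matrix.of fun i j => ∫ s in (0:ℝ)..h, mexp s A i j

section Helpers

variable {n : ℕ} (A : Matrix (Fin n) (Fin n) ℝ)

lemma mexp_zero : mexp 0 A = 1 := by
  simp [mexp, NormedSpace.exp_zero]

lemma mexp_add (s t : ℝ) : mexp (s + t) A = mexp s A * mexp t A := by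
  unfold mexp
  rw [add_smul]
  exact NormedSpace.exp_add_of_commute (((Commute.refl A).smul_left s).smul_right t)

lemma mexp_cont : Continuous fun s : ℝ => mexp s A :=
  NormedSpace.exp_continuous.comp (continuous_id.smul continuous_const)

lemma norm_exp_le [Nonempty (Fin n)] (M : Matrix (Fin n) (Fin n) ℝ) :
    ‖NormedSpace.exp M‖ ≤ Real.exp ‖M‖ := by
  haveI : CompleteSpace (Matrix (Fin n) (Fin n) ℝ) := FiniteDimensional.complete ℝ _
  calc ‖NormedSpace.exp M‖
      ≤ ∑' k : ℕ, ‖((Nat.factorial k : ℝ))⁻¹ • M ^ k‖ := by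
        rw [NormedSpace.exp_eq_tsum ℝ]
        exact norm_tsum_le_tsum_norm (NormedSpace.norm_expSeries_summable' M)
    _ ≤ ∑' k : ℕ, ((Nat.factorial k : ℝ))⁻¹ • ‖M‖ ^ k := by
        refine Summable.tsum_le_tsum (fun k => ?_) (NormedSpace.norm_expSeries_summable' M)
          (NormedSpace.expSeries_summable' (𝕂 := ℝ) ‖M‖)
        rw [norm_smul, norm_inv, Real.norm_natCast, smul_eq_mul]
        exact mul_le_mul_of_nonneg_left (norm_pow_le M k) (by positivity)
    _ = Real.exp ‖M‖ := by
        rw [Real.exp_eq_exp_ℝ]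
        exact (NormedSpace.exp_series_hasSum_exp' ‖M‖).tsum_eq

lemma norm_mexp_le [Nonempty (Fin n)] (s : ℝ) : ‖mexp s A‖ ≤ Real.exp (|s| * ‖A‖) := by
  have := norm_exp_le (s • A)
  rwa [norm_smul, Real.norm_eq_abs] at this

noncomputable def entryCLM (i j : Fin n) : Matrix (Fin n) (Fin n) ℝ →L[ℝ] ℝ :=
  LinearMap.toContinuousLinearMap
    { toFun := fun M => M i j
      map_add' := fun _ _ => rfl
      map_smul' := fun _ _ => rfl }

lemma mint_eq (h : ℝ) : mint h A = ∫ s in (0:ℝ)..h, mexp s A := by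
  haveI : CompleteSpace (Matrix (Fin n) (Fin n) ℝ) := FiniteDimensional.complete ℝ _
  ext i j
  have h2 := ContinuousLinearMap.intervalIntegral_comp_comm (entryCLM i j)
    ((mexp_cont A).intervalIntegrable (μ := MeasureTheory.volume) 0 h)
  simp only [entryCLM, LinearMap.coe_toContinuousLinearMap', LinearMap.coe_mk,
    AddHom.coe_mk] at h2
  change ∫ x in (0:ℝ)..h, mexp x A i j = (∫ x in (0:ℝ)..h, mexp x A) i j at h2
  simp [mint, h2]

lemma mint_zero : mint 0 A = 0 := by
  ext i j
  simp [mint]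

lemma mint_add (δ h : ℝ) : mint (δ + h) A = mint δ A + mexp δ A * mint h A := by
  haveI : CompleteSpace (Matrix (Fin n) (Fin n) ℝ) := FiniteDimensional.complete ℝ _
  rw [mint_eq, mint_eq, mint_eq]
  have i1 :=
    (mexp_cont A).intervalIntegrable (μ := MeasureTheory.volume) 0 δ
  have i2 :=
    (mexp_cont A).intervalIntegrable (μ := MeasureTheory.volume) δ (δ + h)
  rw [← intervalIntegral.integral_add_adjacent_intervals i1 i2]
  congr 1
  have hshift := intervalIntegral.integral_comp_add_left (a := (0:ℝ)) (b := h)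
    (fun s => mexp s A) δ
  rw [add_zero] at hshift
  rw [← hshift]
  have hmul : ∀ u : ℝ, mexp (δ + u) A = mexp δ A * mexp u A := fun u => mexp_add A δ u
  simp_rw [hmul]
  have := ContinuousLinearMap.intervalIntegral_comp_comm
    (ContinuousLinearMap.mul ℝ (Matrix (Fin n) (Fin n) ℝ) (mexp δ A))
    ((mexp_cont A).intervalIntegrable (μ := MeasureTheory.volume) 0 h)
  simpa using this

lemma norm_mint_le [Nonempty (Fin n)] {h : ℝ} (hh : 0 ≤ h) :
    ‖mint h A‖ ≤ ∫ s in (0:ℝ)..h, Real.exp (‖A‖ * s) := by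
  rw [mint_eq]
  refine le_trans (intervalIntegral.norm_integral_le_integral_norm hh) ?_
  refine intervalIntegral.integral_mono_on hh ((mexp_cont A).norm.intervalIntegrable _ _)
    ((Real.continuous_exp.comp (continuous_const.mul continuous_id)).intervalIntegrable _ _)
    (fun s hs => ?_)
  refine (norm_mexp_le A s).trans ?_
  rw [abs_of_nonneg hs.1, mul_comm]

lemma root_bound {a abar Y X τ α : ℝ} {q : ℕ} (ha : 0 < a) (hab : a ≤ abar) (hq : 0 < q)
    (hY : 0 ≤ Y) (hX : 0 ≤ X)
    (h : a * Y ^ q ≤ Real.exp (-(α * q * τ)) * (abar * X ^ q)) :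
    Y ≤ (abar / a) ^ (1 / (q:ℝ)) * (Real.exp (-(α * τ)) * X) := by
  have hba : (0:ℝ) ≤ abar / a := div_nonneg (le_trans ha.le hab) ha.le
  have hZ : 0 ≤ (abar / a) ^ (1 / (q:ℝ)) * (Real.exp (-(α * τ)) * X) :=
    mul_nonneg (Real.rpow_nonneg hba _) (mul_nonneg (Real.exp_nonneg _) hX)
  refine le_of_pow_le_pow_left₀ hq.ne' hZ ?_
  have h1 : ((abar / a) ^ (1 / (q:ℝ))) ^ q = abar / a := by
    rw [← Real.rpow_natCast ((abar / a) ^ (1 / (q:ℝ))) q, ← Real.rpow_mul hba,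
      one_div, inv_mul_cancel₀ (by exact_mod_cast hq.ne'), Real.rpow_one]
  have h2 : Real.exp (-(α * τ)) ^ q = Real.exp (-(α * q * τ)) := by
    rw [← Real.exp_nat_mul]
    congr 1
    ring
  rw [mul_pow, mul_pow, h1, h2, div_mul_eq_mul_div, le_div_iff₀ ha]
  nlinarith [h]

end Helpers

/-- Theorem 1: any trajectory generated by the minimum attention control law
(the controller picks, at each execution instant, an index `L_k ∈ {1,…,L}`, an input
satisfying the Lyapunov decrease at all intermediate times `ℏ₁,…,ℏ_{L_k}` and the
control gain bound, and waits `ℏ_{L_k}`) is GES with rate `α` and the stated gain. -/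
theorem mac_implies_GES {n m : ℕ} (A : Matrix (Fin n) (Fin n) ℝ) (B : Matrix (Fin n) (Fin m) ℝ)
    (α β a abar Δ : ℝ) (q L : ℕ) (ℏ : ℕ → ℝ) (V : (Fin n → ℝ) → ℝ)
    (hα : 0 < α) (hβ : 0 < β) (hq : 0 < q) (ha : 0 < a) (hab : a ≤ abar) (hL : 1 ≤ L)
    (hℏ0 : ℏ 0 = 0) (hℏmono : ∀ l, l < L → ℏ l < ℏ (l + 1))
    (hΔub : ∀ l, 1 ≤ l → l ≤ L → ℏ l - ℏ (l - 1) ≤ Δ)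
    (hΔmem : ∃ l, 1 ≤ l ∧ l ≤ L ∧ Δ = ℏ l - ℏ (l - 1))
    (hVlow : ∀ x : Fin n → ℝ, a * ‖x‖ ^ q ≤ V x)
    (hVup : ∀ x : Fin n → ℝ, V x ≤ abar * ‖x‖ ^ q)
    (xs : ℕ → Fin n → ℝ) (us : ℕ → Fin m → ℝ) (Lk : ℕ → ℕ)
    (hLk : ∀ k, 1 ≤ Lk k ∧ Lk k ≤ L)
    (hu : ∀ k, ‖us k‖ ≤ β * ‖xs k‖)
    (hdec : ∀ k, ∀ l, 1 ≤ l → l ≤ Lk k →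
      V (mexp (ℏ l) A *ᵥ xs k + mint (ℏ l) A *ᵥ (B *ᵥ us k)) ≤
        Real.exp (-(α * (q : ℝ) * ℏ l)) * V (xs k))
    (hstep : ∀ k, xs (k + 1) = mexp (ℏ (Lk k)) A *ᵥ xs k + mint (ℏ (Lk k)) A *ᵥ (B *ᵥ us k))
    (tk : ℕ → ℝ) (htk0 : tk 0 = 0) (htkstep : ∀ k, tk (k + 1) = tk k + ℏ (Lk k))
    (x : ℝ → Fin n → ℝ)
    (hx : ∀ (k : ℕ) (t : ℝ), t ∈ Set.Ico (tk k) (tk (k + 1)) →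
      x t = mexp (t - tk k) A *ᵥ xs k + mint (t - tk k) A *ᵥ (B *ᵥ us k)) :
    ∀ t : ℝ, 0 ≤ t →
      ‖x t‖ ≤ (abar / a) ^ (1 / (q : ℝ)) *
        (Real.exp (‖A‖ * Δ) + β * Real.exp (α * (ℏ L - Δ)) *
          (∫ s in (0:ℝ)..Δ, Real.exp (‖A‖ * s)) * ‖B‖) *
        Real.exp (α * Δ) * Real.exp (-(α * t)) * ‖xs 0‖ := by
  classical
  intro t ht
  -- degenerate dimension
  rcases Nat.eq_zero_or_pos n with hn | hn
  · subst hn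
    have h0 : ∀ v : Fin 0 → ℝ, ‖v‖ = 0 := fun v => by
      rw [Subsingleton.elim v 0, norm_zero]
    rw [h0, h0, mul_zero]
  haveI : Nonempty (Fin n) := ⟨⟨0, hn⟩⟩
  -- monotonicity of ℏ
  have hmono : ∀ i j : ℕ, i ≤ j → j ≤ L → ℏ i ≤ ℏ j := by
    intro i j hij hjL
    induction j with
    | zero => simp [Nat.le_zero.mp hij]
    | succ j ih =>
      rcases Nat.lt_or_ge i (j + 1) with hlt | hge
      · exact le_trans (ih (Nat.lt_succ_iff.mp hlt) (le_trans (Nat.le_succ j) hjL))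
          (le_of_lt (hℏmono j (lt_of_lt_of_le (Nat.lt_succ_self j) hjL)))
      · rw [le_antisymm hij hge]
  have hΔpos : 0 < Δ := by
    obtain ⟨l, hl1, hlL, hEq⟩ := hΔmem
    have h' : ℏ (l - 1) < ℏ l := by
      have := hℏmono (l - 1) (by omega)
      rwa [Nat.sub_add_cancel hl1] at this
    rw [hEq]; linarith
  have hV0 : ∀ z, 0 ≤ V z := fun z =>
    le_trans (mul_nonneg ha.le (pow_nonneg (norm_nonneg _) _)) (hVlow z)
  set r : ℝ := (abar / a) ^ (1 / (q:ℝ)) with hr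
  have hba : (0:ℝ) ≤ abar / a := div_nonneg (le_trans ha.le hab) ha.le
  have hr0 : 0 ≤ r := Real.rpow_nonneg hba _
  set X0 : ℝ := ‖xs 0‖ with hX0
  -- decay of V along samples
  have hVk : ∀ k, V (xs k) ≤ Real.exp (-(α * q * tk k)) * V (xs 0) := by
    intro k
    induction k with
    | zero => rw [htk0]; simp
    | succ k ih =>
      have hd := hdec k (Lk k) (hLk k).1 le_rfl
      rw [← hstep k] at hd
      calc V (xs (k + 1)) ≤ Real.exp (-(α * q * ℏ (Lk k))) * V (xs k) := hd
        _ ≤ Real.exp (-(α * q * ℏ (Lk k))) * (Real.exp (-(α * q * tk k)) * V (xs 0)) :=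
            mul_le_mul_of_nonneg_left ih (Real.exp_nonneg _)
        _ = Real.exp (-(α * q * tk (k + 1))) * V (xs 0) := by
            rw [← mul_assoc, ← Real.exp_add, htkstep k]
            congr 2
            ring
  have hxk : ∀ k, ‖xs k‖ ≤ r * (Real.exp (-(α * tk k)) * X0) := by
    intro k
    refine root_bound ha hab hq (norm_nonneg _) (norm_nonneg _) ?_
    exact le_trans (hVlow _) (le_trans (hVk k)
      (mul_le_mul_of_nonneg_left (hVup _) (Real.exp_nonneg _)))
  -- locate t in the sampling grid
  have h1pos : 0 < ℏ 1 := by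
    have := hℏmono 0 (by omega)
    rwa [hℏ0] at this
  have hgrow : ∀ k : ℕ, (k : ℝ) * ℏ 1 ≤ tk k := by
    intro k
    induction k with
    | zero => simp [htk0]
    | succ k ih =>
      rw [htkstep]
      push_cast
      have hbig : ℏ 1 ≤ ℏ (Lk k) := hmono 1 (Lk k) (hLk k).1 (hLk k).2
      nlinarith
  have hex : ∃ N, t < tk N := by
    obtain ⟨N, hN⟩ := exists_nat_gt (t / ℏ 1)
    exact ⟨N, lt_of_lt_of_le ((div_lt_iff₀ h1pos).mp hN) (hgrow N)⟩
  obtain ⟨k, hk1, hk2⟩ : ∃ k, tk k ≤ t ∧ t < tk (k + 1) := by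
    have hk0 : t < tk (Nat.find hex) := Nat.find_spec hex
    have hk0ne : Nat.find hex ≠ 0 := by
      intro h
      rw [h, htk0] at hk0
      linarith
    obtain ⟨k, hk⟩ := Nat.exists_eq_succ_of_ne_zero hk0ne
    rw [hk] at hk0
    refine ⟨k, ?_, hk0⟩
    by_contra hcon
    push_neg at hcon
    exact Nat.find_min hex (by omega) hcon
  -- locate t among intermediate instants
  set c : ℝ := t - tk k with hc
  have hc0 : 0 ≤ c := by simp only [hc]; linarith
  have hcub : c < ℏ (Lk k) := by
    have h' := htkstep k
    simp only [hc]
    linarith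
  set P : ℕ → Prop := fun l => ℏ l ≤ c with hP
  have hP0 : P 0 := by simp [hP, hℏ0, hc0]
  set l : ℕ := Nat.findGreatest P (Lk k) with hldef
  have hlle : l ≤ Lk k := Nat.findGreatest_le _
  have hPl : ℏ l ≤ c := Nat.findGreatest_spec (Nat.zero_le _) hP0
  have hlltLk : l < Lk k := by
    rcases lt_or_eq_of_le hlle with h' | h'
    · exact h'
    · exfalso; rw [h'] at hPl; linarith
  have hnext : c < ℏ (l + 1) :=
    not_le.mp (Nat.findGreatest_is_greatest (Nat.lt_succ_self l) hlltLk)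
  set δ : ℝ := c - ℏ l with hδ
  have hδ0 : 0 ≤ δ := by simp only [hδ]; linarith
  have hδΔ : δ ≤ Δ := by
    have h' := hΔub (l + 1) (by omega) (by have := (hLk k).2; omega)
    simp only [Nat.add_sub_cancel] at h'
    simp only [hδ]
    linarith
  -- the intermediate state y
  set w : Fin n → ℝ := B *ᵥ us k with hw
  set y : Fin n → ℝ := mexp (ℏ l) A *ᵥ xs k + mint (ℏ l) A *ᵥ w with hy
  have hVy : V y ≤ Real.exp (-(α * q * ℏ l)) * V (xs k) := by
    rcases Nat.eq_zero_or_pos l with h0 | h1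
    · have : y = xs k := by
        rw [hy, h0, hℏ0, mexp_zero, mint_zero, one_mulVec, zero_mulVec, add_zero]
      rw [this, h0, hℏ0]
      simp
    · exact hdec k l h1 hlle
  have hyb : ‖y‖ ≤ r * (Real.exp (-(α * (tk k + ℏ l))) * X0) := by
    refine root_bound ha hab hq (norm_nonneg _) (norm_nonneg _) ?_
    calc a * ‖y‖ ^ q ≤ V y := hVlow y
      _ ≤ Real.exp (-(α * q * ℏ l)) * V (xs k) := hVy
      _ ≤ Real.exp (-(α * q * ℏ l)) * (Real.exp (-(α * q * tk k)) * V (xs 0)) :=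
          mul_le_mul_of_nonneg_left (hVk k) (Real.exp_nonneg _)
      _ ≤ Real.exp (-(α * q * ℏ l)) * (Real.exp (-(α * q * tk k)) * (abar * X0 ^ q)) :=
          mul_le_mul_of_nonneg_left
            (mul_le_mul_of_nonneg_left (hVup _) (Real.exp_nonneg _)) (Real.exp_nonneg _)
      _ = Real.exp (-(α * q * (tk k + ℏ l))) * (abar * X0 ^ q) := by
          rw [← mul_assoc, ← Real.exp_add]
          congr 2
          ring
  -- express x t through y
  have hxt := hx k t ⟨hk1, hk2⟩
  have hct : t - tk k = δ + ℏ l := by simp [hδ, hc]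
  rw [hct, mexp_add, mint_add] at hxt
  have hxt2 : x t = mexp δ A *ᵥ y + mint δ A *ᵥ w := by
    rw [hxt, hy, add_mulVec, ← mulVec_mulVec, ← mulVec_mulVec, mulVec_add]
    abel
  -- norm estimates
  set E : ℝ := Real.exp (‖A‖ * Δ) with hE
  set I : ℝ := ∫ s in (0:ℝ)..Δ, Real.exp (‖A‖ * s) with hI
  have hI0 : 0 ≤ I := intervalIntegral.integral_nonneg hΔpos.le (fun s _ => Real.exp_nonneg _)
  have hmexpδ : ‖mexp δ A‖ ≤ E := by
    refine (norm_mexp_le A δ).trans ?_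
    rw [abs_of_nonneg hδ0, hE]
    exact Real.exp_le_exp.mpr (by nlinarith [norm_nonneg A])
  have hmintδ : ‖mint δ A‖ ≤ I := by
    refine (norm_mint_le A hδ0).trans ?_
    exact intervalIntegral.integral_mono_interval le_rfl hδ0 hδΔ
      (MeasureTheory.ae_of_all _ (fun s => Real.exp_nonneg _))
      ((Real.continuous_exp.comp (continuous_const.mul continuous_id)).intervalIntegrable _ _)
  -- time comparisons
  have ht1 : t ≤ tk k + ℏ l + Δ := by
    have : t - tk k = δ + ℏ l := hct
    linarith
  have ht2 : t ≤ tk k + ℏ L := by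
    have hLL : ℏ (Lk k) ≤ ℏ L := hmono (Lk k) L (Nat.le_of_lt_succ (Nat.lt_succ_of_le (hLk k).2)) le_rfl
    have : t - tk k < ℏ (Lk k) := hcub
    linarith
  have he1 : Real.exp (-(α * (tk k + ℏ l))) ≤ Real.exp (α * Δ) * Real.exp (-(α * t)) := by
    rw [← Real.exp_add]
    refine Real.exp_le_exp.mpr ?_
    have := mul_le_mul_of_nonneg_left ht1 hα.le
    linarith
  have he2 : Real.exp (-(α * tk k)) ≤
      Real.exp (α * (ℏ L - Δ)) * (Real.exp (α * Δ) * Real.exp (-(α * t))) := by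
    rw [← Real.exp_add, ← Real.exp_add]
    refine Real.exp_le_exp.mpr ?_
    have := mul_le_mul_of_nonneg_left ht2 hα.le
    linarith
  have hyb2 : ‖y‖ ≤ r * (Real.exp (α * Δ) * Real.exp (-(α * t)) * X0) := by
    refine hyb.trans ?_
    have : Real.exp (-(α * (tk k + ℏ l))) * X0 ≤ Real.exp (α * Δ) * Real.exp (-(α * t)) * X0 :=
      mul_le_mul_of_nonneg_right he1 (norm_nonneg _)
    exact mul_le_mul_of_nonneg_left this hr0
  have hxkb : ‖xs k‖ ≤
      r * (Real.exp (α * (ℏ L - Δ)) * (Real.exp (α * Δ) * Real.exp (-(α * t))) * X0) := by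
    refine (hxk k).trans ?_
    exact mul_le_mul_of_nonneg_left (mul_le_mul_of_nonneg_right he2 (norm_nonneg _)) hr0
  have hwb : ‖w‖ ≤ ‖B‖ * (β *
      (r * (Real.exp (α * (ℏ L - Δ)) * (Real.exp (α * Δ) * Real.exp (-(α * t))) * X0))) := by
    refine (Matrix.linfty_opNorm_mulVec B (us k)).trans ?_
    refine mul_le_mul_of_nonneg_left ?_ (norm_nonneg B)
    exact (hu k).trans (mul_le_mul_of_nonneg_left hxkb hβ.le)
  calc ‖x t‖ = ‖mexp δ A *ᵥ y + mint δ A *ᵥ w‖ := by rw [hxt2]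
    _ ≤ ‖mexp δ A *ᵥ y‖ + ‖mint δ A *ᵥ w‖ := norm_add_le _ _
    _ ≤ ‖mexp δ A‖ * ‖y‖ + ‖mint δ A‖ * ‖w‖ :=
        add_le_add (Matrix.linfty_opNorm_mulVec _ _) (Matrix.linfty_opNorm_mulVec _ _)
    _ ≤ E * (r * (Real.exp (α * Δ) * Real.exp (-(α * t)) * X0)) +
        I * (‖B‖ * (β *
          (r * (Real.exp (α * (ℏ L - Δ)) * (Real.exp (α * Δ) * Real.exp (-(α * t))) * X0)))) := by
        refine add_le_add (mul_le_mul hmexpδ hyb2 (norm_nonneg _) (Real.exp_nonneg _))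
          (mul_le_mul hmintδ hwb (norm_nonneg _) hI0)
    _ = r * (E + β * Real.exp (α * (ℏ L - Δ)) * I * ‖B‖) *
        Real.exp (α * Δ) * Real.exp (-(α * t)) * X0 := by ring
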